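/- For every path connected subset A of the Manhattan plane ℝ₁², the double hatching L(A) is L-invariant, i.e. L(L(A)) = L(A). -/

import Mathlib

/-!
For path connected `A`, the double hatching `L(A)` is exactly the set of points all four of whose
closed quadrants meet `A`. Indeed, given points of `A` in the lower-left and upper-left quadrants
of `p`, a path in `A` between them crosses the row of `p`. Follow it from the lower point up to its
first crossing and, backwards, from the upper point down to its last crossing: the columns swept by
these two arcs, together with the two crossing columns, yield a point of `L_y(A)` on the row of `p`
to the left of `p`; symmetrically there is one to the right, so `p ∈ L_x(L_y(A))`.
The quadrant condition is preserved by both hatchings, hence `L(L(A)) ⊆ L(A)`.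
-/

open Set

/-- The taxicab (ℓ¹) distance on the plane, making `ℝ × ℝ` the Manhattan plane ℝ₁². -/
def taxiDist (p q : ℝ × ℝ) : ℝ := |p.1 - q.1| + |p.2 - q.2|

/-- Horizontal hatching `L_x(A)`. -/
def hatchX (A : Set (ℝ × ℝ)) : Set (ℝ × ℝ) :=
  {p | ∃ a ∈ A, ∃ b ∈ A, a.2 = p.2 ∧ b.2 = p.2 ∧ a.1 ≤ p.1 ∧ p.1 ≤ b.1}

/-- Vertical hatching `L_y(A)`. -/
def hatchY (A : Set (ℝ × ℝ)) : Set (ℝ × ℝ) :=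
  {p | ∃ a ∈ A, ∃ b ∈ A, a.1 = p.1 ∧ b.1 = p.1 ∧ a.2 ≤ p.2 ∧ p.2 ≤ b.2}

/-- Double hatching `L(A) = L_x(L_y(A))`. -/
def doubleHatch (A : Set (ℝ × ℝ)) : Set (ℝ × ℝ) := hatchX (hatchY A)

def quadrantHull (A : Set (ℝ × ℝ)) : Set (ℝ × ℝ) :=
  {p | (∃ a ∈ A, a.1 ≤ p.1 ∧ a.2 ≤ p.2) ∧ (∃ a ∈ A, p.1 ≤ a.1 ∧ a.2 ≤ p.2) ∧
    (∃ a ∈ A, a.1 ≤ p.1 ∧ p.2 ≤ a.2) ∧ (∃ a ∈ A, p.1 ≤ a.1 ∧ p.2 ≤ a.2)}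

lemma subset_hatchX (B : Set (ℝ × ℝ)) : B ⊆ hatchX B :=
  fun p hp => ⟨p, hp, p, hp, rfl, rfl, le_rfl, le_rfl⟩

lemma subset_hatchY (B : Set (ℝ × ℝ)) : B ⊆ hatchY B :=
  fun p hp => ⟨p, hp, p, hp, rfl, rfl, le_rfl, le_rfl⟩

lemma subset_doubleHatch (B : Set (ℝ × ℝ)) : B ⊆ doubleHatch B :=
  (subset_hatchY B).trans (subset_hatchX _)

lemma hatchX_mono {B C : Set (ℝ × ℝ)} (h : B ⊆ C) : hatchX B ⊆ hatchX C := by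
  rintro p ⟨a, ha, b, hb, hab⟩
  exact ⟨a, h ha, b, h hb, hab⟩

lemma hatchY_mono {B C : Set (ℝ × ℝ)} (h : B ⊆ C) : hatchY B ⊆ hatchY C := by
  rintro p ⟨a, ha, b, hb, hab⟩
  exact ⟨a, h ha, b, h hb, hab⟩

lemma subset_quadrantHull (B : Set (ℝ × ℝ)) : B ⊆ quadrantHull B :=
  fun p hp => ⟨⟨p, hp, le_rfl, le_rfl⟩, ⟨p, hp, le_rfl, le_rfl⟩, ⟨p, hp, le_rfl, le_rfl⟩,
    ⟨p, hp, le_rfl, le_rfl⟩⟩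

lemma hatchX_quadrantHull_subset (B : Set (ℝ × ℝ)) :
    hatchX (quadrantHull B) ⊆ quadrantHull B := by
  rintro p ⟨u, ⟨⟨a, ha, ha1, ha2⟩, -, ⟨c, hc, hc1, hc2⟩, -⟩,
    v, ⟨-, ⟨b, hb, hb1, hb2⟩, -, ⟨d, hd, hd1, hd2⟩⟩, hu2, hv2, hu1, hv1⟩
  exact ⟨⟨a, ha, by linarith, by linarith⟩, ⟨b, hb, by linarith, by linarith⟩,
    ⟨c, hc, by linarith, by linarith⟩, ⟨d, hd, by linarith, by linarith⟩⟩

lemma hatchY_quadrantHull_subset (B : Set (ℝ × ℝ)) :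
    hatchY (quadrantHull B) ⊆ quadrantHull B := by
  rintro p ⟨u, ⟨⟨a, ha, ha1, ha2⟩, ⟨b, hb, hb1, hb2⟩, -, -⟩,
    v, ⟨-, -, ⟨c, hc, hc1, hc2⟩, ⟨d, hd, hd1, hd2⟩⟩, hu1, hv1, hu2, hv2⟩
  exact ⟨⟨a, ha, by linarith, by linarith⟩, ⟨b, hb, by linarith, by linarith⟩,
    ⟨c, hc, by linarith, by linarith⟩, ⟨d, hd, by linarith, by linarith⟩⟩

lemma doubleHatch_quadrantHull_subset (B : Set (ℝ × ℝ)) :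
    doubleHatch (quadrantHull B) ⊆ quadrantHull B :=
  (hatchX_mono (hatchY_quadrantHull_subset B)).trans (hatchX_quadrantHull_subset B)

lemma doubleHatch_subset_quadrantHull (B : Set (ℝ × ℝ)) : doubleHatch B ⊆ quadrantHull B :=
  (hatchX_mono (hatchY_mono (subset_quadrantHull B))).trans (doubleHatch_quadrantHull_subset B)

lemma exists_first_eq_of_le_of_le {α δ : Type*} [ConditionallyCompleteLinearOrder α]
    [TopologicalSpace α] [OrderTopology α] [DenselyOrdered α] [LinearOrder δ]
    [TopologicalSpace δ] [OrderClosedTopology δ] {g : α → δ} {a b : α} {y : δ} (hab : a ≤ b)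
    (hg : ContinuousOn g (Icc a b)) (ha : g a ≤ y) (hb : y ≤ g b) :
    ∃ t ∈ Icc a b, g t = y ∧ ∀ s ∈ Icc a t, g s ≤ y := by
  set S := Icc a b ∩ g ⁻¹' Ici y
  have hS : IsClosed S := hg.preimage_isClosed_of_isClosed isClosed_Icc isClosed_Ici
  have hSbdd : BddBelow S := ⟨a, fun s hs => hs.1.1⟩
  obtain ⟨ht, hyt⟩ : sInf S ∈ S := hS.csInf_mem ⟨b, ⟨hab, le_rfl⟩, hb⟩ hSbdd
  -- `g` reaches `y` somewhere on `[a, sInf S]`, and minimality of `sInf S` pins the place down.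
  obtain ⟨s, hs, hgs⟩ := intermediate_value_Icc ht.1 (hg.mono (Icc_subset_Icc_right ht.2))
    ⟨ha, hyt⟩
  have hst : s = sInf S := le_antisymm hs.2
    (csInf_le hSbdd ⟨⟨hs.1, hs.2.trans ht.2⟩, hgs.ge⟩)
  have hgt : g (sInf S) = y := hst ▸ hgs
  refine ⟨sInf S, ht, hgt, fun r hr => ?_⟩
  rcases hr.2.lt_or_eq with hlt | rfl
  · by_contra! hyr
    exact (csInf_le hSbdd ⟨⟨hr.1, hlt.le.trans ht.2⟩, hyr.le⟩).not_gt hlt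
  · exact hgt.le

lemma IsPathConnected.exists_mem_level_forall_uIcc {X : Type*} [TopologicalSpace X]
    {A : Set X} (hA : IsPathConnected A) {ψ φ : X → ℝ} (hψ : Continuous ψ) (hφ : Continuous φ)
    {b c : X} (hb : b ∈ A) (hc : c ∈ A) {y : ℝ} (hby : φ b ≤ y) (hyc : y ≤ φ c) :
    ∃ p ∈ A, φ p = y ∧ ∀ x ∈ uIcc (ψ b) (ψ p), ∃ q ∈ A, ψ q = x ∧ φ q ≤ y := by
  obtain ⟨γ, hγA⟩ := hA.joinedIn b hb c hc
  obtain ⟨t, -, hyt, hbelow⟩ := exists_first_eq_of_le_of_le (zero_le_one' unitInterval)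
    (hφ.comp γ.continuous).continuousOn (by simpa using hby) (by simpa using hyc)
  refine ⟨γ t, hγA t, hyt, fun x hx => ?_⟩
  have hcont : ContinuousOn (ψ ∘ γ) (uIcc 0 t) := (hψ.comp γ.continuous).continuousOn
  obtain ⟨s, hs, hsx⟩ := intermediate_value_uIcc hcont (by simpa using hx)
  rw [uIcc_of_le (unitInterval.nonneg' (t := t))] at hs
  exact ⟨γ s, hγA s, hsx, hbelow s hs⟩

lemma IsPathConnected.exists_row_hatchY {A : Set (ℝ × ℝ)} (hA : IsPathConnected A)
    {b c : ℝ × ℝ} (hb : b ∈ A) (hc : c ∈ A) {y : ℝ} (hby : b.2 ≤ y) (hyc : y ≤ c.2) :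
    ∃ u ∈ {x | (x, y) ∈ hatchY A}, ∃ v ∈ {x | (x, y) ∈ hatchY A},
      uIcc b.1 u ∩ uIcc c.1 v ⊆ {x | (x, y) ∈ hatchY A} := by
  obtain ⟨p, hp, hpy, hbelow⟩ :=
    hA.exists_mem_level_forall_uIcc continuous_fst continuous_snd hb hc hby hyc
  obtain ⟨p', hp', hp'y, habove⟩ := hA.exists_mem_level_forall_uIcc (φ := fun q => -q.2)
    continuous_fst continuous_snd.neg hc hb (neg_le_neg hyc) (neg_le_neg hby)
  refine ⟨p.1, ⟨p, hp, p, hp, rfl, rfl, hpy.le, hpy.ge⟩,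
    p'.1, ⟨p', hp', p', hp', rfl, rfl, (neg_inj.1 hp'y).le, (neg_inj.1 hp'y).ge⟩,
    fun x ⟨hxb, hxc⟩ => ?_⟩
  obtain ⟨q, hq, hq1, hq2⟩ := hbelow x hxb
  obtain ⟨q', hq', hq'1, hq'2⟩ := habove x hxc
  exact ⟨q, hq, q', hq', hq1, hq'1, hq2, neg_le_neg_iff.1 hq'2⟩

lemma exists_le_of_uIcc_inter_subset {α : Type*} [LinearOrder α] {S : Set α} {b c u v x : α}
    (hu : u ∈ S) (hv : v ∈ S) (hS : uIcc b u ∩ uIcc c v ⊆ S) (hb : b ≤ x) (hc : c ≤ x) :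
    ∃ s ∈ S, s ≤ x := by
  rcases le_or_gt u x with hux | hxu
  · exact ⟨u, hu, hux⟩
  rcases le_or_gt v x with hvx | hxv
  · exact ⟨v, hv, hvx⟩
  exact ⟨x, hS ⟨mem_uIcc_of_le hb hxu.le, mem_uIcc_of_le hc hxv.le⟩, le_rfl⟩

lemma exists_ge_of_uIcc_inter_subset {α : Type*} [LinearOrder α] {S : Set α} {b c u v x : α}
    (hu : u ∈ S) (hv : v ∈ S) (hS : uIcc b u ∩ uIcc c v ⊆ S) (hb : x ≤ b) (hc : x ≤ c) :
    ∃ s ∈ S, x ≤ s := by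
  rcases le_or_gt x u with hxu | hux
  · exact ⟨u, hu, hxu⟩
  rcases le_or_gt x v with hxv | hvx
  · exact ⟨v, hv, hxv⟩
  exact ⟨x, hS ⟨mem_uIcc_of_ge hux.le hb, mem_uIcc_of_ge hvx.le hc⟩, le_rfl⟩

lemma quadrantHull_subset_doubleHatch {A : Set (ℝ × ℝ)} (hA : IsPathConnected A) :
    quadrantHull A ⊆ doubleHatch A := by
  rintro p ⟨⟨a, ha, ha1, ha2⟩, ⟨b, hb, hb1, hb2⟩, ⟨c, hc, hc1, hc2⟩, ⟨d, hd, hd1, hd2⟩⟩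
  obtain ⟨u, hu, v, hv, hleft⟩ := hA.exists_row_hatchY ha hc ha2 hc2
  obtain ⟨s, hs, hsp⟩ := exists_le_of_uIcc_inter_subset hu hv hleft ha1 hc1
  obtain ⟨u', hu', v', hv', hright⟩ := hA.exists_row_hatchY hb hd hb2 hd2
  obtain ⟨s', hs', hps'⟩ := exists_ge_of_uIcc_inter_subset hu' hv' hright hb1 hd1
  exact ⟨(s, p.2), hs, (s', p.2), hs', rfl, rfl, hsp, hps'⟩

/-- For every path connected subset `A` of the Manhattan plane, the double hatching
`L(A)` is L-invariant: `L(L(A)) = L(A)`. -/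
theorem doubleHatch_idem (A : Set (ℝ × ℝ)) (hA : IsPathConnected A) :
    doubleHatch (doubleHatch A) = doubleHatch A := by
  have hL : doubleHatch A = quadrantHull A :=
    (doubleHatch_subset_quadrantHull A).antisymm (quadrantHull_subset_doubleHatch hA)
  refine (subset_doubleHatch _).antisymm' ?_
  calc doubleHatch (doubleHatch A) = doubleHatch (quadrantHull A) := by rw [hL]
    _ ⊆ quadrantHull A := doubleHatch_quadrantHull_subset A
    _ = doubleHatch A := hL.symm
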